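/- Let R be a K-graded ring and q a maximal ideal of R_0. Then the sum m over all K-graded ideals a of R with a ∩ R_0 = q is a K-graded ideal with m ∩ R_0 = q, and m is the unique maximal such K-graded ideal. -/

import Mathlib

open DirectSum

section Aux

variable {K R : Type*} [AddCommGroup K] [DecidableEq K] [CommRing R]
variable (𝒜 : K → AddSubgroup R) [GradedRing 𝒜]

private lemma aux_mul {i : K} {b : R} (hb : b ∈ 𝒜 i) (a : R) :
    (DirectSum.decompose 𝒜 (a * b) 0 : R) = (DirectSum.decompose 𝒜 a (-i) : R) * b := by
  lift b to 𝒜 i using hb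
  rw [DirectSum.decompose_mul, DirectSum.decompose_coe]
  have h := DirectSum.coe_mul_of_apply_add (fun i => 𝒜 i) (DirectSum.decompose 𝒜 a) b (-i)
  rwa [neg_add_cancel] at h

/-- Key lemma: a degree-zero element of the extension of `q` to `R` lies in `q`. -/
private lemma aux_key (q : Ideal ↥(SetLike.GradeZero.subring 𝒜))
    (x : ↥(SetLike.GradeZero.subring 𝒜))
    (hx : (x : R) ∈ Ideal.span ((SetLike.GradeZero.subring 𝒜).subtype '' (q : Set _))) :
    x ∈ q := by
  obtain ⟨c, hsupp, hsum⟩ := Submodule.mem_span_set.mp hx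
  have h0 : ∀ i ∈ c.support, i ∈ 𝒜 0 := by
    intro i hi
    obtain ⟨y, _, rfl⟩ := hsupp hi
    exact y.2
  have e2 : (x : R) = ∑ i ∈ c.support, c i * i := by
    rw [← hsum]; rfl
  have e3 : (x : R) = ∑ i ∈ c.support, (DirectSum.decompose 𝒜 (c i) 0 : R) * i := by
    have hx0 : (x : R) ∈ 𝒜 0 := x.2
    conv_lhs => rw [← DirectSum.decompose_of_mem_same 𝒜 hx0]
    conv_lhs => rw [e2]
    rw [← GradedRing.proj_apply, map_sum]
    refine Finset.sum_congr rfl fun i hi => ?_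
    rw [GradedRing.proj_apply, aux_mul 𝒜 (h0 i hi) (c i), neg_zero]
  -- now package the sum inside `(SetLike.GradeZero.subring 𝒜)`
  have hterm : ∀ i : {i // i ∈ c.support},
      (⟨(DirectSum.decompose 𝒜 (c i.1) 0 : R) * i.1,
        mul_mem (SetLike.coe_mem _) (h0 i.1 i.2)⟩ : (SetLike.GradeZero.subring 𝒜)) ∈ q := by
    rintro ⟨i, hi⟩
    obtain ⟨y, hyq, hy⟩ := hsupp hi
    have : (⟨(DirectSum.decompose 𝒜 (c i) 0 : R) * i,
        mul_mem (SetLike.coe_mem _) (h0 i hi)⟩ : (SetLike.GradeZero.subring 𝒜)) =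
        (⟨(DirectSum.decompose 𝒜 (c i) 0 : R), SetLike.coe_mem _⟩ : (SetLike.GradeZero.subring 𝒜)) * y := by
      apply Subtype.ext
      simp only [MulMemClass.coe_mul]
      rw [show ((y : (SetLike.GradeZero.subring 𝒜)) : R) = i from hy]
    rw [this]
    exact Ideal.mul_mem_left q _ hyq
  have hxeq : x = ∑ i ∈ c.support.attach,
      (⟨(DirectSum.decompose 𝒜 (c i.1) 0 : R) * i.1,
        mul_mem (SetLike.coe_mem _) (h0 i.1 i.2)⟩ : (SetLike.GradeZero.subring 𝒜)) := by
    apply Subtype.ext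
    push_cast
    rw [e3, ← Finset.sum_attach c.support (fun i => (DirectSum.decompose 𝒜 (c i) 0 : R) * i)]
  rw [hxeq]
  exact Ideal.sum_mem q fun i _ => hterm i

end Aux

/-- Let `R` be a `K`-graded ring and `q` a maximal ideal of `R₀`. Then the sum `m`
over all `K`-graded ideals `a` of `R` with `a ∩ R₀ = q` is itself a `K`-graded ideal with
`m ∩ R₀ = q`, and `m` is the unique maximal such `K`-graded ideal. -/
theorem stmt_5 {K R : Type*} [AddCommGroup K] [DecidableEq K] [CommRing R]
    (𝒜 : K → AddSubgroup R) [GradedRing 𝒜]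
    (q : Ideal ↥(SetLike.GradeZero.subring 𝒜)) (hq : q.IsMaximal) :
    letI contract : Ideal R → Ideal ↥(SetLike.GradeZero.subring 𝒜) :=
      fun a => Ideal.comap (SetLike.GradeZero.subring 𝒜).subtype a
    letI m : Ideal R := sSup {a : Ideal R | Ideal.IsHomogeneous 𝒜 a ∧ contract a = q}
    (Ideal.IsHomogeneous 𝒜 m ∧ contract m = q) ∧
      ∀ a : Ideal R, Ideal.IsHomogeneous 𝒜 a → contract a = q → a ≤ m := by
  beta_reduce
  set S : Set (Ideal R) := {a : Ideal R |
    Ideal.IsHomogeneous 𝒜 a ∧ Ideal.comap (SetLike.GradeZero.subring 𝒜).subtype a = q}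
    with hSdef
  set m : Ideal R := sSup S with hmdef
  -- the extension of q is a member of S
  have heS : Ideal.span ((SetLike.GradeZero.subring 𝒜).subtype '' (q : Set _)) ∈ S := by
    constructor
    · refine Ideal.homogeneous_span 𝒜 _ fun x hx => ?_
      obtain ⟨y, _, rfl⟩ := hx
      exact ⟨0, y.2⟩
    · apply le_antisymm
      · intro x hx
        exact aux_key 𝒜 q x hx
      · intro y hy
        exact Ideal.subset_span ⟨y, hy, rfl⟩
  have hmem : ∀ a ∈ S, a ≤ m := fun a ha => le_sSup ha
  refine ⟨⟨Ideal.IsHomogeneous.sSup fun a ha => ha.1, ?_⟩, fun a ha hac => le_sSup ⟨ha, hac⟩⟩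
  apply le_antisymm
  · -- contract m ≤ q
    intro x hx
    have hx' : (x : R) ∈ sSup S := hx
    rw [sSup_eq_iSup'] at hx'
    have key : ∀ y : R, y ∈ (⨆ a : S, (a : Ideal R)) →
        (⟨(DirectSum.decompose 𝒜 y 0 : R), SetLike.coe_mem _⟩ : (SetLike.GradeZero.subring 𝒜)) ∈ q := by
      intro y hy
      refine Submodule.iSup_induction (motive := fun z =>
          (⟨(DirectSum.decompose 𝒜 z 0 : R), SetLike.coe_mem _⟩ : (SetLike.GradeZero.subring 𝒜)) ∈ q)
        (fun a : S => (a : Ideal R)) hy ?_ ?_ ?_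
      · rintro ⟨a, haS, haq⟩ z hz
        have hz0 : (DirectSum.decompose 𝒜 z 0 : R) ∈ a := haS 0 hz
        have : (⟨(DirectSum.decompose 𝒜 z 0 : R), SetLike.coe_mem _⟩ : (SetLike.GradeZero.subring 𝒜)) ∈ Ideal.comap (SetLike.GradeZero.subring 𝒜).subtype a := hz0
        rwa [haq] at this
      · convert q.zero_mem using 1
        apply Subtype.ext; simp
      · intro z w hz hw
        have : (⟨(DirectSum.decompose 𝒜 (z + w) 0 : R), SetLike.coe_mem _⟩ : (SetLike.GradeZero.subring 𝒜)) =
            (⟨(DirectSum.decompose 𝒜 z 0 : R), SetLike.coe_mem _⟩ : (SetLike.GradeZero.subring 𝒜)) +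
            (⟨(DirectSum.decompose 𝒜 w 0 : R), SetLike.coe_mem _⟩ : (SetLike.GradeZero.subring 𝒜)) := by
          apply Subtype.ext; simp
        rw [this]
        exact q.add_mem hz hw
    have hxq := key (x : R) hx'
    have : (⟨(DirectSum.decompose 𝒜 (x : R) 0 : R), SetLike.coe_mem _⟩ : (SetLike.GradeZero.subring 𝒜)) = x := by
      apply Subtype.ext
      exact DirectSum.decompose_of_mem_same 𝒜 x.2
    rwa [this] at hxq
  · -- q ≤ contract m
    intro y hy
    have : (y : R) ∈ Ideal.span ((SetLike.GradeZero.subring 𝒜).subtype '' (q : Set _)) := Ideal.subset_span ⟨y, hy, rfl⟩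
    exact hmem _ heS this
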